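/- If a finite well-formed history F is linearizable with respect to a sequential object O and a finite well-formed history E is similar to F, then E is linearizable with respect to O. -/

import Mathlib

/-!
Let `E₁ = E.filter keep ++ rs` witness the similarity and `F ++ rs'` be the extension linearizing `F`
by `S`. Then `E ++ rs ++ rs'` is an extension of `E` which `S` linearizes too. Its completion
equals that of `E₁ ++ rs'`: the invocations dropped by `keep` are pending, and since `E` invokes
every operation at most once, no response in `rs` or `rs'` can answer them. Now `E₁ ++ rs'` is
equivalent to `F ++ rs'`, so the completions are equivalent. A precedence in the completion of
`E₁ ++ rs'` ends with an invocation, which lies in `E₁` since `rs'` holds only responses; so it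
is a precedence of `E₁`, hence of `F`, and it survives in the completion of `F ++ rs'` because
the later operation has a response there.
-/

namespace RV

inductive Event where
  | inv (p : ℕ) (op : ℕ)
  | res (p : ℕ) (op : ℕ)
deriving DecidableEq

abbrev History := List Event

def Event.proc : Event → ℕ
  | .inv p _ => p
  | .res p _ => p

def Event.op : Event → ℕ
  | .inv _ o => o
  | .res _ o => o

def Event.isInv : Event → Bool
  | .inv _ _ => true
  | .res _ _ => false

/-- The subsequence of events of process `p`. -/
def proj (E : History) (p : ℕ) : History := E.filter (fun e => e.proc == p)

/-- Two histories are equivalent if every process has the same subsequence of events. -/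
def Equivalent (E F : History) : Prop := ∀ p, proj E p = proj F p

/-- Operation `a` precedes operation `b` in `E`: the response of `a` occurs
before the invocation of `b`. -/
def prec (E : History) (a b : ℕ) : Prop :=
  ∃ i j p q, i < j ∧ E[(i : ℕ)]? = some (Event.res p a) ∧ E[(j : ℕ)]? = some (Event.inv q b)

/-- A single process' subsequence alternates invocation, matching response, ... ,
possibly ending with a pending invocation. -/
inductive Alt : History → Prop where
  | nil : Alt []
  | pend (p o : ℕ) : Alt [Event.inv p o]
  | step (p o : ℕ) (l : History) : Alt l → Alt (Event.inv p o :: Event.res p o :: l)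

/-- Well-formed history: per-process alternation, and every operation identifier is
invoked at most once and responded at most once. -/
def WellFormed (E : History) : Prop :=
  (∀ p, Alt (proj E p)) ∧
  (∀ o, E.countP (fun e => e.isInv && e.op == o) ≤ 1) ∧
  (∀ o, E.countP (fun e => !e.isInv && e.op == o) ≤ 1)

def CompleteIn (E : History) (o : ℕ) : Prop :=
  (∃ p, Event.inv p o ∈ E) ∧ ∃ q, Event.res q o ∈ E

def PendingIn (E : History) (o : ℕ) : Prop :=
  (∃ p, Event.inv p o ∈ E) ∧ ∀ q, Event.res q o ∉ E

def hasRes (E : History) (o : ℕ) : Bool := E.any (fun e => !e.isInv && e.op == o)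

/-- `comp E` removes the invocations of pending operations. -/
def comp (E : History) : History := E.filter (fun e => !e.isInv || hasRes E e.op)

/-- `E'` extends `E` by appending responses to some pending operations. -/
def IsExtension (E E' : History) : Prop :=
  ∃ rs : History, E' = E ++ rs ∧
    (∀ e ∈ rs, e.isInv = false ∧ PendingIn E e.op ∧ Event.inv e.proc e.op ∈ E) ∧
    rs.Pairwise (fun a b => a.op ≠ b.op)

/-- Sequential histories: alternating invocation/matching-response pairs. -/
inductive Seq : History → Prop where
  | nil : Seq []
  | step (p o : ℕ) (l : History) : Seq l → Seq (Event.inv p o :: Event.res p o :: l)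

/-- `E` is linearizable w.r.t. the sequential object `O` (a set of sequential
histories): there is an extension `E'` of `E` and `S ∈ O` such that `comp E'`
and `S` are equivalent and `<_{comp E'} ⊆ <_S`. -/
def Linearizable (O : Set History) (E : History) : Prop :=
  ∃ E', IsExtension E E' ∧ ∃ S ∈ O, Equivalent (comp E') S ∧
    ∀ a b, prec (comp E') a b → prec S a b

/-- `E` is similar to `F`: some history `E'`, obtained from `E` by appending
responses to some pending operations and removing the invocations of some other
pending operations, is equivalent to `F` and satisfies `≺_{E'} ⊆ ≺_F`. -/
def Similar (E F : History) : Prop :=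
  ∃ (keep : Event → Bool) (rs : History),
    (∀ e ∈ E, keep e = false → e.isInv = true ∧ PendingIn E e.op) ∧
    (∀ e ∈ rs, e.isInv = false ∧ PendingIn E e.op ∧ Event.inv e.proc e.op ∈ E ∧
      keep (Event.inv e.proc e.op) = true) ∧
    rs.Pairwise (fun a b => a.op ≠ b.op) ∧
    Equivalent (E.filter keep ++ rs) F ∧
    (∀ a b, prec (E.filter keep ++ rs) a b → prec F a b)

/-- The class `GenLin`: sets of well-formed histories closed under prefixes and
under similarity. -/
def GenLin (O : Set History) : Prop :=
  (∀ F ∈ O, ∀ E : History, E <+: F → E ∈ O) ∧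
  (∀ F ∈ O, ∀ E : History, Similar E F → E ∈ O)

namespace Event

lemma eq_inv_of_isInv {e : Event} (h : e.isInv = true) : e = inv e.proc e.op := by
  cases e <;> simp_all [isInv, proc, op]

lemma eq_res_of_not_isInv {e : Event} (h : e.isInv = false) : e = res e.proc e.op := by
  cases e <;> simp_all [isInv, proc, op]

end Event

lemma pair_sublist_iff {α : Type*} {x y : α} {l : List α} :
    List.Sublist [x, y] l ↔ ∃ i j : ℕ, i < j ∧ l[i]? = some x ∧ l[j]? = some y := by
  constructor
  · rw [List.cons_sublist_iff]
    rintro ⟨r₁, r₂, rfl, hx, hy⟩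
    obtain ⟨i, hi, rfl⟩ := List.getElem_of_mem hx
    obtain ⟨k, hk, rfl⟩ := List.getElem_of_mem (List.singleton_sublist.mp hy)
    exact ⟨i, r₁.length + k, by omega, by simp [List.getElem?_append_left hi],
      by simp [List.getElem?_append_right]⟩
  · rintro ⟨i, j, hij, hx, hy⟩
    refine List.cons_sublist_iff.mpr
      ⟨l.take j, l.drop j, (List.take_append_drop j l).symm, ?_, ?_⟩
    · exact List.mem_iff_getElem?.mpr ⟨i, by rwa [List.getElem?_take_of_lt hij]⟩
    · exact List.singleton_sublist.mpr (List.mem_iff_getElem?.mpr ⟨0, by simpa using hy⟩)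

lemma prec_iff_sublist {E : History} {a b : ℕ} :
    prec E a b ↔ ∃ p q, List.Sublist [Event.res p a, Event.inv q b] E := by
  simp only [prec, pair_sublist_iff]
  constructor
  · rintro ⟨i, j, p, q, h⟩
    exact ⟨p, q, i, j, h⟩
  · rintro ⟨p, q, i, j, h⟩
    exact ⟨i, j, p, q, h⟩

lemma prec_append_right {E : History} {a b : ℕ} (h : prec E a b) (F : History) :
    prec (E ++ F) a b := by
  obtain ⟨p, q, h⟩ := prec_iff_sublist.mp h
  exact prec_iff_sublist.mpr ⟨p, q, h.trans (List.sublist_append_left E F)⟩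

lemma prec_of_prec_append {E F : History} {a b : ℕ} (hF : ∀ e ∈ F, e.isInv = false)
    (h : prec (E ++ F) a b) : prec E a b := by
  obtain ⟨i, j, p, q, hij, hi, hj⟩ := h
  by_cases hjE : j < E.length
  · rw [List.getElem?_append_left (by omega)] at hi
    rw [List.getElem?_append_left hjE] at hj
    exact ⟨i, j, p, q, hij, hi, hj⟩
  · rw [List.getElem?_append_right (by omega)] at hj
    simpa [Event.isInv] using hF _ (List.mem_of_getElem? hj)

lemma mem_proj_iff {E : History} {p : ℕ} {e : Event} : e ∈ proj E p ↔ e ∈ E ∧ e.proc = p := by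
  simp [proj]

lemma proj_filter (P : Event → Bool) (E : History) (p : ℕ) :
    proj (E.filter P) p = (proj E p).filter P := by
  simp only [proj, List.filter_filter, Bool.and_comm]

namespace Equivalent

variable {E F G : History}

lemma mem_iff (h : Equivalent E F) {e : Event} : e ∈ E ↔ e ∈ F := by
  simpa [mem_proj_iff] using congrArg (e ∈ ·) (h e.proc)

lemma trans (h : Equivalent E F) (h' : Equivalent F G) : Equivalent E G :=
  fun p => (h p).trans (h' p)

lemma append_right (h : Equivalent E F) (G : History) : Equivalent (E ++ G) (F ++ G) :=
  fun p => by simpa only [proj, List.filter_append] using congrArg (· ++ proj G p) (h p)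

end Equivalent

lemma hasRes_iff {E : History} {o : ℕ} : hasRes E o = true ↔ ∃ q, Event.res q o ∈ E := by
  constructor
  · rw [hasRes, List.any_eq_true]
    rintro ⟨e, he, hp⟩
    cases e with
    | inv p o' => simp [Event.isInv] at hp
    | res p o' =>
      simp only [Event.isInv, Event.op, Bool.not_false, Bool.true_and, beq_iff_eq] at hp
      exact ⟨p, hp ▸ he⟩
  · rintro ⟨q, hq⟩
    exact List.any_eq_true.mpr ⟨_, hq, by simp [Event.isInv, Event.op]⟩

lemma hasRes_congr {E F : History} (h : ∀ q o, Event.res q o ∈ E ↔ Event.res q o ∈ F) :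
    hasRes E = hasRes F := by
  funext o
  exact Bool.eq_iff_iff.mpr (by simp only [hasRes_iff, h])

lemma Equivalent.hasRes_eq {E F : History} (h : Equivalent E F) : hasRes E = hasRes F :=
  hasRes_congr fun _ _ => h.mem_iff

lemma Equivalent.comp {E F : History} (h : Equivalent E F) : Equivalent (comp E) (comp F) := by
  intro p
  simp only [RV.comp, proj_filter, h p, h.hasRes_eq]

lemma prec_comp_iff {E : History} {a b : ℕ} :
    prec (comp E) a b ↔ prec E a b ∧ hasRes E b = true := by
  simp only [prec_iff_sublist]
  constructor
  · rintro ⟨p, q, h⟩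
    refine ⟨⟨p, q, h.trans List.filter_sublist⟩, ?_⟩
    have hb : Event.inv q b ∈ comp E := h.subset (by simp)
    simpa [Event.isInv, Event.op] using List.of_mem_filter hb
  · rintro ⟨⟨p, q, h⟩, hb⟩
    refine ⟨p, q, ?_⟩
    simpa [comp, Event.isInv, Event.op, hb] using h.filter (fun e => !e.isInv || hasRes E e.op)

lemma comp_filter_append {A B : History} {keep : Event → Bool}
    (hdrop : ∀ e ∈ A, keep e = false → e.isInv = true ∧ ∀ q, Event.res q e.op ∉ A ++ B) :
    comp (A.filter keep ++ B) = comp (A ++ B) := by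
  have hres : hasRes (A.filter keep ++ B) = hasRes (A ++ B) := by
    refine hasRes_congr fun q o => ?_
    simp only [List.mem_append, List.mem_filter]
    refine or_congr_left ⟨And.left, fun he => ⟨he, Bool.not_eq_false _ |>.mp fun hk => ?_⟩⟩
    simpa [Event.isInv] using (hdrop _ he hk).1
  rw [comp, comp, hres, List.filter_append, List.filter_append, List.filter_filter]
  congr 1
  refine List.filter_congr fun e he => ?_
  cases hk : keep e
  · obtain ⟨hinv, hnores⟩ := hdrop e he hk
    have : hasRes (A ++ B) e.op = false :=
      Bool.eq_false_iff.mpr fun h => (hasRes_iff.mp h).elim hnores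
    simp [hinv, this]
  · simp

lemma WellFormed.inv_proc_eq {E : History} (hwf : WellFormed E) {p q o : ℕ}
    (hp : Event.inv p o ∈ E) (hq : Event.inv q o ∈ E) : p = q := by
  by_contra hpq
  have hsplit := List.countP_eq_countP_filter_add E (fun e => e.isInv && e.op == o)
    (fun e => e.proc == p)
  have h₁ : 0 < (E.filter fun e => e.proc == p).countP (fun e => e.isInv && e.op == o) :=
    List.countP_pos_iff.mpr ⟨_, List.mem_filter.mpr ⟨hp, by simp [Event.proc]⟩,
      by simp [Event.isInv, Event.op]⟩
  have h₂ : 0 < (E.filter fun e => !(e.proc == p)).countP (fun e => e.isInv && e.op == o) :=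
    List.countP_pos_iff.mpr ⟨_, List.mem_filter.mpr ⟨hq, by simp [Event.proc, Ne.symm hpq]⟩,
      by simp [Event.isInv, Event.op]⟩
  have := hwf.2.1 o
  omega

lemma comp_filter_append_of_wellFormed {E B : History} {keep : Event → Bool}
    (hwf : WellFormed E) (hdrop : ∀ e ∈ E, keep e = false → e.isInv = true ∧ PendingIn E e.op)
    (hB : ∀ f ∈ B, Event.inv f.proc f.op ∈ E.filter keep) :
    comp (E.filter keep ++ B) = comp (E ++ B) := by
  refine comp_filter_append fun e he hke => ⟨(hdrop e he hke).1, fun q hq => ?_⟩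
  obtain ⟨he_inv, -, hpend⟩ := hdrop e he hke
  rw [Event.eq_inv_of_isInv he_inv] at he hke
  rcases List.mem_append.mp hq with hq | hq
  · exact hpend q hq
  · obtain ⟨hqE, hkeep⟩ := List.mem_filter.mp (hB _ hq)
    obtain rfl : q = e.proc := hwf.inv_proc_eq hqE he
    simp_all [Event.proc, Event.op]

lemma inv_mem_of_equivalent_append {A rs F : History} (h : Equivalent (A ++ rs) F)
    (hrs : ∀ e ∈ rs, e.isInv = false) {p o : ℕ} (hinv : Event.inv p o ∈ F) :
    Event.inv p o ∈ A := by
  rcases List.mem_append.mp (h.mem_iff.mpr hinv) with hA | hrs'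
  · exact hA
  · simpa [Event.isInv] using hrs _ hrs'

lemma isExtension_append_append {E F rs rs' : History}
    (hrs : ∀ e ∈ rs, e.isInv = false ∧ PendingIn E e.op ∧ Event.inv e.proc e.op ∈ E)
    (hrs_op : rs.Pairwise fun a b => a.op ≠ b.op)
    (hrs' : ∀ e ∈ rs', e.isInv = false ∧ PendingIn F e.op ∧ Event.inv e.proc e.op ∈ F)
    (hrs'_op : rs'.Pairwise fun a b => a.op ≠ b.op)
    (hres : ∀ q o, Event.res q o ∈ E ++ rs → Event.res q o ∈ F)
    (hinv : ∀ p o, Event.inv p o ∈ F → Event.inv p o ∈ E) :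
    IsExtension E (E ++ (rs ++ rs')) := by
  refine ⟨rs ++ rs', rfl, fun e he => ?_,
    List.pairwise_append.mpr ⟨hrs_op, hrs'_op, fun x hx y hy hxy => ?_⟩⟩
  · rcases List.mem_append.mp he with he | he
    · exact hrs e he
    · obtain ⟨he_res, ⟨-, hpend⟩, hinvF⟩ := hrs' e he
      exact ⟨he_res, ⟨⟨_, hinv _ _ hinvF⟩,
        fun q hq => hpend q (hres _ _ (List.mem_append_left _ hq))⟩, hinv _ _ hinvF⟩
  · have hxF := hres _ _ (List.mem_append_right E (Event.eq_res_of_not_isInv (hrs x hx).1 ▸ hx))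
    exact (hrs' y hy).2.1.2 x.proc (hxy ▸ hxF)

theorem linearizability_similarity_closed_general (O : Set History)
    (F E : History) (hwfE : WellFormed E)
    (hlin : Linearizable O F) (hsim : Similar E F) : Linearizable O E := by
  obtain ⟨keep, rs, hdrop, hrs, hrs_op, hequiv, hprec⟩ := hsim
  obtain ⟨_, ⟨rs', rfl, hrs', hrs'_op⟩, S, hS, hS_equiv, hS_prec⟩ := hlin
  have hinv : ∀ p o, Event.inv p o ∈ F → Event.inv p o ∈ E.filter keep :=
    fun _ _ => inv_mem_of_equivalent_append hequiv fun e he => (hrs e he).1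
  have hres : ∀ q o, Event.res q o ∈ E ++ rs → Event.res q o ∈ F := by
    intro q o h
    refine hequiv.mem_iff.mp (List.mem_append.mpr ((List.mem_append.mp h).imp_left fun hE => ?_))
    refine List.mem_filter.mpr ⟨hE, Bool.not_eq_false _ |>.mp fun hk => ?_⟩
    simpa [Event.isInv] using (hdrop _ hE hk).1
  have hcomp : comp (E.filter keep ++ (rs ++ rs')) = comp (E ++ (rs ++ rs')) := by
    refine comp_filter_append_of_wellFormed hwfE hdrop fun f hf => ?_
    rcases List.mem_append.mp hf with hf | hf
    · exact List.mem_filter.mpr ⟨(hrs f hf).2.2.1, (hrs f hf).2.2.2⟩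
    · exact hinv _ _ (hrs' f hf).2.2
  have hequiv' : Equivalent (E.filter keep ++ (rs ++ rs')) (F ++ rs') := by
    simpa only [List.append_assoc] using hequiv.append_right rs'
  refine ⟨E ++ (rs ++ rs'), isExtension_append_append
      (fun e he => (hrs e he).imp_right fun h => ⟨h.1, h.2.1⟩) hrs_op hrs' hrs'_op hres
      (fun p o h => (List.mem_filter.mp (hinv p o h)).1), S, hS, ?_, fun a b hab => ?_⟩
  · rw [← hcomp]
    exact hequiv'.comp.trans hS_equiv
  · rw [← hcomp, prec_comp_iff, hequiv'.hasRes_eq, ← List.append_assoc] at hab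
    have hF : prec F a b := hprec a b (prec_of_prec_append (fun e he => (hrs' e he).1) hab.1)
    exact hS_prec a b (prec_comp_iff.mpr ⟨prec_append_right hF rs', hab.2⟩)

/-- If `F` is linearizable w.r.t. a sequential object `O` and `E` is
similar to `F`, then `E` is linearizable w.r.t. `O`. -/
theorem linearizability_similarity_closed (O : Set History) (hO : ∀ S ∈ O, Seq S)
    (F E : History) (hwfF : WellFormed F) (hwfE : WellFormed E)
    (hlin : Linearizable O F) (hsim : Similar E F) : Linearizable O E :=
  linearizability_similarity_closed_general O F E hwfE hlin hsim

end RV
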